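/- For all pairs (k,r) ≠ (l,s) with k, l ∈ ℕ and r, s ≥ 1: for all a ∈ V¹_{k,r} and b ∈ V¹_{l,s}, one has φ(a⋆ b) = 0; and for all a ∈ V²_{k,r} and b ∈ V²_{l,s}, one has φ(a⋆ b) = 0. -/
import Mathlib


open scoped ComplexOrder

noncomputable section

set_option linter.unusedSectionVars false
set_option maxHeartbeats 1000000


/-- The product `S_{μ₁} ⋯ S_{μ_p}` along a word `μ` (with `S_μ = 1` for the empty word). -/
def wordProd {A : Type*} [Monoid A] {n : ℕ} (S : Fin n → A) (μ : List (Fin n)) : A :=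
  (μ.map S).prod

/-- `B_{r,s} = Span { S_μ S_ν⋆ : |μ| = r, |ν| = s }`;  `F_k = B_{k,k}`. -/
def Bspan {A : Type*} [Ring A] [Algebra ℂ A] [StarRing A] {n : ℕ}
    (S : Fin n → A) (r s : ℕ) : Submodule ℂ A :=
  Submodule.span ℂ
    {a | ∃ μ ν : List (Fin n), μ.length = r ∧ ν.length = s ∧
        a = wordProd S μ * star (wordProd S ν)}

/-- `W_0 = ℂ·1` and, for `k ≥ 1`,
`W_k = {x ∈ F_k : φ(y⋆ x) = 0 for all y ∈ F_{k-1}}`. -/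
def Wsub {A : Type*} [NormedRing A] [NormedAlgebra ℂ A] [StarRing A] {n : ℕ}
    (φ : A →L[ℂ] ℂ) (S : Fin n → A) : ℕ → Submodule ℂ A
  | 0 => Submodule.span ℂ {(1 : A)}
  | (k + 1) =>
      Bspan S (k + 1) (k + 1) ⊓
        ⨅ y ∈ Bspan S k k,
          LinearMap.ker ((φ : A →ₗ[ℂ] ℂ) ∘ₗ LinearMap.mulLeft ℂ (star y))

/-- `V¹_{k,r} = Span { S_μ x : |μ| = r, x ∈ W_k }`. -/
def V1 {A : Type*} [NormedRing A] [NormedAlgebra ℂ A] [StarRing A] {n : ℕ}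
    (φ : A →L[ℂ] ℂ) (S : Fin n → A) (k r : ℕ) : Submodule ℂ A :=
  Submodule.span ℂ
    {a | ∃ μ : List (Fin n), ∃ x : A, μ.length = r ∧ x ∈ Wsub φ S k ∧
        a = wordProd S μ * x}

/-- `V²_{k,r} = Span { x S_γ⋆ : |γ| = r, x ∈ W_k }`. -/
def V2 {A : Type*} [NormedRing A] [NormedAlgebra ℂ A] [StarRing A] {n : ℕ}
    (φ : A →L[ℂ] ℂ) (S : Fin n → A) (k r : ℕ) : Submodule ℂ A :=
  Submodule.span ℂ
    {a | ∃ γ : List (Fin n), ∃ x : A, γ.length = r ∧ x ∈ Wsub φ S k ∧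
        a = x * star (wordProd S γ)}


theorem cuntz_orth {A : Type*} [NormedRing A] [StarRing A] [CStarRing A]
    [NormedAlgebra ℂ A] [StarModule ℂ A] [CompleteSpace A]
    {n : ℕ} (S : Fin n → A)
    (hS1 : ∀ i, star (S i) * S i = 1)
    (hS2 : ∑ j, S j * star (S j) = 1)
    {i j : Fin n} (hij : i ≠ j) : star (S i) * S j = 0 := by
  letI : CStarAlgebra A := ⟨⟩
  letI := CStarAlgebra.spectralOrder A
  haveI := CStarAlgebra.spectralOrderedRing A
  set p : Fin n → A := fun m => S m * star (S m) with hp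
  have hidem : ∀ m, p m * p m = p m := by
    intro m
    show S m * star (S m) * (S m * star (S m)) = S m * star (S m)
    calc S m * star (S m) * (S m * star (S m)) = S m * (star (S m) * S m) * star (S m) := by
          noncomm_ring
    _ = S m * star (S m) := by rw [hS1, mul_one]
  have hsum : ∑ m ∈ Finset.univ.erase i, p i * p m * p i = 0 := by
    have h1 : ∑ m, p i * p m * p i = p i := by
      have : ∑ m, p i * p m * p i = p i * (∑ m, p m) * p i := by
        rw [Finset.mul_sum, Finset.sum_mul]
      rw [this, hS2, mul_one, hidem]
    have h2 : ∑ m ∈ Finset.univ.erase i, p i * p m * p i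
        = (∑ m, p i * p m * p i) - p i * p i * p i := by
      rw [eq_sub_iff_add_eq, Finset.sum_erase_add _ _ (Finset.mem_univ i)]
    rw [h2, h1, hidem, hidem, sub_self]
  have hstar : ∀ m, star (p m) = p m := by
    intro m; show star (S m * star (S m)) = S m * star (S m); rw [star_mul, star_star]
  have hterm : ∀ m, p i * p m * p i = star (p m * p i) * (p m * p i) := by
    intro m
    rw [star_mul, hstar, hstar]
    calc p i * p m * p i = p i * (p m * p m) * p i := by rw [hidem]
    _ = p i * p m * (p m * p i) := by noncomm_ring
  have hzero : p j * p i = 0 := by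
    have hmem : j ∈ Finset.univ.erase i := Finset.mem_erase.mpr ⟨hij.symm, Finset.mem_univ j⟩
    have := (Finset.sum_eq_zero_iff_of_nonneg (fun m _ => by
      rw [hterm]; exact star_mul_self_nonneg _)).mp hsum j hmem
    rw [hterm] at this
    exact (CStarRing.star_mul_self_eq_zero_iff _).mp this
  have hij' : p i * p j = 0 := by
    have := congrArg star hzero
    rw [star_mul, star_zero, hstar, hstar] at this
    exact this
  have key : star (S i) * S j = star (S i) * (p i * p j) * S j := by
    show star (S i) * S j = star (S i) * (S i * star (S i) * (S j * star (S j))) * S j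
    calc star (S i) * S j = 1 * (star (S i) * S j) * 1 := by rw [one_mul, mul_one]
    _ = (star (S i) * S i) * (star (S i) * S j) * (star (S j) * S j) := by rw [hS1, hS1]
    _ = star (S i) * (S i * star (S i) * (S j * star (S j))) * S j := by noncomm_ring
  rw [key, hij', mul_zero, zero_mul]

section Machinery

variable {A : Type*} [NormedRing A] [StarRing A] [CStarRing A]
    [NormedAlgebra ℂ A] [StarModule ℂ A] [CompleteSpace A]
    {n : ℕ} (S : Fin n → A)

theorem wordProd_nil : wordProd S ([] : List (Fin n)) = 1 := rfl

theorem wordProd_cons (i : Fin n) (μ : List (Fin n)) :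
    wordProd S (i :: μ) = S i * wordProd S μ := by
  simp [wordProd]

theorem wordProd_singleton (i : Fin n) : wordProd S [i] = S i := by
  simp [wordProd]

theorem wordProd_append (μ ν : List (Fin n)) :
    wordProd S (μ ++ ν) = wordProd S μ * wordProd S ν := by
  simp [wordProd]

/-- core case analysis of `star (W ν) * W α`. -/
theorem core_cases
    (hS1 : ∀ i, star (S i) * S i = 1)
    (hS2 : ∑ j, S j * star (S j) = 1) (ν α : List (Fin n)) :
    (star (wordProd S ν) * wordProd S α = 0) ∨
    (∃ τ, star (wordProd S ν) * wordProd S α = wordProd S τ ∧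
        α.length = ν.length + τ.length) ∨
    (∃ τ, star (wordProd S ν) * wordProd S α = star (wordProd S τ) ∧
        ν.length = α.length + τ.length) := by
  induction ν generalizing α with
  | nil =>
    refine Or.inr (Or.inl ⟨α, ?_, by simp⟩)
    simp [wordProd_nil]
  | cons i ν ih =>
    cases α with
    | nil =>
      refine Or.inr (Or.inr ⟨i :: ν, ?_, by simp⟩)
      simp [wordProd_nil]
    | cons j α =>
      rw [wordProd_cons, wordProd_cons, star_mul, mul_assoc, ← mul_assoc (star (S i))]
      by_cases hij : i = j
      · subst hij
        rw [hS1, one_mul]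
        rcases ih α with h | ⟨τ, h, hlen⟩ | ⟨τ, h, hlen⟩
        · exact Or.inl h
        · exact Or.inr (Or.inl ⟨τ, h, by simp [hlen]; omega⟩)
        · exact Or.inr (Or.inr ⟨τ, h, by simp [hlen]; omega⟩)
      · left
        rw [cuntz_orth S hS1 hS2 hij, zero_mul, mul_zero]


/-- span of monomials with degree `d` -/
def Dspan (d : ℤ) : Submodule ℂ A :=
  Submodule.span ℂ
    {a | ∃ μ ν : List (Fin n), (μ.length : ℤ) - ν.length = d ∧
        a = wordProd S μ * star (wordProd S ν)}

/-- span of all monomials -/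
def Mspan : Submodule ℂ A :=
  Submodule.span ℂ
    {a | ∃ μ ν : List (Fin n), a = wordProd S μ * star (wordProd S ν)}

theorem Bspan_le_Dspan (r s : ℕ) : Bspan S r s ≤ Dspan S ((r : ℤ) - s) := by
  apply Submodule.span_le.mpr
  rintro a ⟨μ, ν, h1, h2, rfl⟩
  exact Submodule.subset_span ⟨μ, ν, by rw [h1, h2], rfl⟩

theorem Bspan_le_Mspan (r s : ℕ) : Bspan S r s ≤ Mspan S := by
  apply Submodule.span_le.mpr
  rintro a ⟨μ, ν, _, _, rfl⟩
  exact Submodule.subset_span ⟨μ, ν, rfl⟩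

theorem Dspan_le_Mspan (d : ℤ) : Dspan S d ≤ Mspan S := by
  apply Submodule.span_le.mpr
  rintro a ⟨μ, ν, _, rfl⟩
  exact Submodule.subset_span ⟨μ, ν, rfl⟩

theorem wordProd_mem_Dspan (τ : List (Fin n)) : wordProd S τ ∈ Dspan S (τ.length : ℤ) := by
  exact Submodule.subset_span ⟨τ, [], by simp, by simp [wordProd_nil]⟩

theorem star_wordProd_mem_Dspan (τ : List (Fin n)) :
    star (wordProd S τ) ∈ Dspan S (-(τ.length : ℤ)) := by
  exact Submodule.subset_span ⟨[], τ, by simp, by simp [wordProd_nil]⟩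

theorem mono_mul (hS1 : ∀ i, star (S i) * S i = 1) (hS2 : ∑ j, S j * star (S j) = 1)
    (μ ν α β : List (Fin n)) :
    (wordProd S μ * star (wordProd S ν) * (wordProd S α * star (wordProd S β)) = 0) ∨
    (∃ ρ σ : List (Fin n),
      wordProd S μ * star (wordProd S ν) * (wordProd S α * star (wordProd S β)) =
        wordProd S ρ * star (wordProd S σ) ∧
      (ρ.length : ℤ) - σ.length =
        ((μ.length : ℤ) - ν.length) + ((α.length : ℤ) - β.length)) := by
  have hre : wordProd S μ * star (wordProd S ν) * (wordProd S α * star (wordProd S β)) =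
      wordProd S μ * (star (wordProd S ν) * wordProd S α) * star (wordProd S β) := by
    noncomm_ring
  rcases core_cases S hS1 hS2 ν α with h | ⟨τ, h, hlen⟩ | ⟨τ, h, hlen⟩
  · left; rw [hre, h, mul_zero, zero_mul]
  · right
    refine ⟨μ ++ τ, β, ?_, ?_⟩
    · rw [hre, h, wordProd_append, mul_assoc]
    · simp only [List.length_append]; push_cast; omega
  · right
    refine ⟨μ, β ++ τ, ?_, ?_⟩
    · rw [hre, h, wordProd_append, star_mul, mul_assoc]
    · simp only [List.length_append]; push_cast; omega

theorem Dspan_mul (hS1 : ∀ i, star (S i) * S i = 1) (hS2 : ∑ j, S j * star (S j) = 1)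
    {d e : ℤ} {x y : A} (hx : x ∈ Dspan S d) (hy : y ∈ Dspan S e) :
    x * y ∈ Dspan S (d + e) := by
  induction hx using Submodule.span_induction with
  | mem x hxg =>
    obtain ⟨μ, ν, hdeg, rfl⟩ := hxg
    induction hy using Submodule.span_induction with
    | mem y hyg =>
      obtain ⟨α, β, hdeg', rfl⟩ := hyg
      rcases mono_mul S hS1 hS2 μ ν α β with h | ⟨ρ, σ, h, hd⟩
      · rw [h]; exact Submodule.zero_mem _
      · rw [h]; exact Submodule.subset_span ⟨ρ, σ, by rw [hd, hdeg, hdeg'], rfl⟩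
    | zero => rw [mul_zero]; exact Submodule.zero_mem _
    | add y z _ _ h1 h2 => rw [mul_add]; exact Submodule.add_mem _ h1 h2
    | smul c y _ h1 => rw [mul_smul_comm]; exact Submodule.smul_mem _ _ h1
  | zero => rw [zero_mul]; exact Submodule.zero_mem _
  | add x x' _ _ h1 h2 => rw [add_mul]; exact Submodule.add_mem _ h1 h2
  | smul c x _ h1 => rw [smul_mul_assoc]; exact Submodule.smul_mem _ _ h1

theorem Mspan_mul (hS1 : ∀ i, star (S i) * S i = 1) (hS2 : ∑ j, S j * star (S j) = 1)
    {x y : A} (hx : x ∈ Mspan S) (hy : y ∈ Mspan S) :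
    x * y ∈ Mspan S := by
  induction hx using Submodule.span_induction with
  | mem x hxg =>
    obtain ⟨μ, ν, rfl⟩ := hxg
    induction hy using Submodule.span_induction with
    | mem y hyg =>
      obtain ⟨α, β, rfl⟩ := hyg
      rcases mono_mul S hS1 hS2 μ ν α β with h | ⟨ρ, σ, h, _⟩
      · rw [h]; exact Submodule.zero_mem _
      · rw [h]; exact Submodule.subset_span ⟨ρ, σ, rfl⟩
    | zero => rw [mul_zero]; exact Submodule.zero_mem _
    | add y z _ _ h1 h2 => rw [mul_add]; exact Submodule.add_mem _ h1 h2
    | smul c y _ h1 => rw [mul_smul_comm]; exact Submodule.smul_mem _ _ h1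
  | zero => rw [zero_mul]; exact Submodule.zero_mem _
  | add x x' _ _ h1 h2 => rw [add_mul]; exact Submodule.add_mem _ h1 h2
  | smul c x _ h1 => rw [smul_mul_assoc]; exact Submodule.smul_mem _ _ h1

theorem Dspan_star {d : ℤ} {x : A} (hx : x ∈ Dspan S d) : star x ∈ Dspan S (-d) := by
  induction hx using Submodule.span_induction with
  | mem x hxg =>
    obtain ⟨μ, ν, hdeg, rfl⟩ := hxg
    rw [star_mul, star_star]
    exact Submodule.subset_span ⟨ν, μ, by omega, rfl⟩
  | zero => rw [star_zero]; exact Submodule.zero_mem _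
  | add x y _ _ h1 h2 => rw [star_add]; exact Submodule.add_mem _ h1 h2
  | smul c x _ h1 => rw [star_smul]; exact Submodule.smul_mem _ _ h1

theorem Mspan_star {x : A} (hx : x ∈ Mspan S) : star x ∈ Mspan S := by
  induction hx using Submodule.span_induction with
  | mem x hxg =>
    obtain ⟨μ, ν, rfl⟩ := hxg
    rw [star_mul, star_star]
    exact Submodule.subset_span ⟨ν, μ, rfl⟩
  | zero => rw [star_zero]; exact Submodule.zero_mem _
  | add x y _ _ h1 h2 => rw [star_add]; exact Submodule.add_mem _ h1 h2
  | smul c x _ h1 => rw [star_smul]; exact Submodule.smul_mem _ _ h1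

variable (φ : A →L[ℂ] ℂ)
variable (hφ : ∀ μ ν : List (Fin n),
      φ (wordProd S μ * star (wordProd S ν)) =
        if μ = ν then ((n : ℂ) ^ μ.length)⁻¹ else 0)

include hφ

theorem φ_Dspan_zero {d : ℤ} (hd : d ≠ 0) {z : A} (hz : z ∈ Dspan S d) : φ z = 0 := by
  induction hz using Submodule.span_induction with
  | mem z hzg =>
    obtain ⟨μ, ν, hdeg, rfl⟩ := hzg
    rw [hφ]
    have : μ ≠ ν := by rintro rfl; omega
    simp [this]
  | zero => exact map_zero φ
  | add x y _ _ h1 h2 => rw [map_add, h1, h2, add_zero]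
  | smul c x _ h1 => rw [map_smul, h1, smul_zero]

theorem φ_star {z : A} (hz : z ∈ Mspan S) :
    φ (star z) = (starRingEnd ℂ) (φ z) := by
  induction hz using Submodule.span_induction with
  | mem z hzg =>
    obtain ⟨μ, ν, rfl⟩ := hzg
    rw [star_mul, star_star, hφ, hφ]
    by_cases h : μ = ν
    · subst h
      simp [map_inv₀, map_pow, Complex.conj_natCast]
    · rw [if_neg h, if_neg (Ne.symm h), map_zero]
  | zero => simp
  | add x y _ _ h1 h2 => rw [star_add, map_add, h1, h2, map_add, map_add]
  | smul c x _ h1 =>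
    rw [star_smul, map_smul, h1, map_smul, smul_eq_mul, smul_eq_mul, map_mul]
    rfl


theorem compression (γ δ : List (Fin n)) (hlen : γ.length = δ.length)
    {z : A} (hz : z ∈ Mspan S) :
    φ (wordProd S γ * z * star (wordProd S δ)) =
      (if γ = δ then ((n : ℂ) ^ γ.length)⁻¹ else 0) * φ z := by
  induction hz using Submodule.span_induction with
  | mem z hzg =>
    obtain ⟨ρ, σ, rfl⟩ := hzg
    have key : wordProd S γ * (wordProd S ρ * star (wordProd S σ)) * star (wordProd S δ) =
        wordProd S (γ ++ ρ) * star (wordProd S (δ ++ σ)) := by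
      rw [wordProd_append, wordProd_append, star_mul]
      noncomm_ring
    rw [key, hφ, hφ]
    by_cases hl : ρ.length = σ.length
    · by_cases h1 : γ = δ
      · by_cases h2 : ρ = σ
        · subst h1; subst h2
          rw [if_pos rfl, if_pos rfl, if_pos rfl, List.length_append, pow_add, mul_inv]
        · rw [if_neg h2, if_neg (by
            intro h
            exact h2 (List.append_inj h (h1 ▸ rfl)).2), mul_zero]
      · rw [if_neg h1, if_neg (by
          intro h
          exact h1 (List.append_inj h hlen).1), zero_mul]
    · have h2 : ρ ≠ σ := by intro h; exact hl (h ▸ rfl)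
      rw [if_neg h2, if_neg (by
        intro h
        apply hl
        have := congrArg List.length h
        simp only [List.length_append] at this
        omega), mul_zero]
  | zero => rw [mul_zero, zero_mul, map_zero, mul_zero]
  | add x y _ _ h1 h2 => rw [mul_add, add_mul, map_add, h1, h2, map_add, mul_add]
  | smul c x _ h1 => rw [mul_smul_comm, smul_mul_assoc, map_smul, h1, map_smul,
      smul_eq_mul, smul_eq_mul]; ring

omit hφ

theorem Bspan_succ (hS2 : ∑ j, S j * star (S j) = 1) (k : ℕ) :
    Bspan S k k ≤ Bspan S (k + 1) (k + 1) := by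
  apply Submodule.span_le.mpr
  rintro a ⟨μ, ν, h1, h2, rfl⟩
  have key : wordProd S μ * star (wordProd S ν) =
      ∑ j, wordProd S (μ ++ [j]) * star (wordProd S (ν ++ [j])) := by
    have : wordProd S μ * star (wordProd S ν) =
        wordProd S μ * (∑ j, S j * star (S j)) * star (wordProd S ν) := by
      rw [hS2, mul_one]
    rw [this, Finset.mul_sum, Finset.sum_mul]
    apply Finset.sum_congr rfl
    intro j _
    rw [wordProd_append, wordProd_append, wordProd_singleton, star_mul]
    noncomm_ring
  rw [key]
  apply Submodule.sum_mem
  intro j _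
  exact Submodule.subset_span ⟨μ ++ [j], ν ++ [j], by simp [h1], by simp [h2], rfl⟩

theorem Bspan_mono (hS2 : ∑ j, S j * star (S j) = 1) {k m : ℕ} (h : k ≤ m) :
    Bspan S k k ≤ Bspan S m m := by
  induction m with
  | zero => simpa [Nat.le_zero.mp h] using le_refl _
  | succ m ih =>
    rcases Nat.lt_or_ge k (m+1) with h' | h'
    · exact le_trans (ih (by omega)) (Bspan_succ S hS2 m)
    · have : k = m + 1 := by omega
      subst this; exact le_refl _

theorem Wsub_le_Bspan (k : ℕ) : Wsub φ S k ≤ Bspan S k k := by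
  cases k with
  | zero =>
    rw [Wsub]
    apply Submodule.span_le.mpr
    rintro a rfl
    exact Submodule.subset_span ⟨[], [], rfl, rfl, by simp [wordProd_nil]⟩
  | succ k =>
    rw [Wsub]
    exact inf_le_left

theorem W_orth_lt (hS2 : ∑ j, S j * star (S j) = 1) {k l : ℕ} (h : k < l)
    {x y : A} (hx : x ∈ Bspan S k k) (hy : y ∈ Wsub φ S l) :
    φ (star x * y) = 0 := by
  obtain ⟨m, rfl⟩ : ∃ m, l = m + 1 := ⟨l - 1, by omega⟩
  rw [Wsub] at hy
  have hy2 := hy.2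
  have hy3 := (Submodule.mem_iInf _).mp hy2 x
  have hy4 := (Submodule.mem_iInf _).mp hy3 (Bspan_mono S hS2 (show k ≤ m by omega) hx)
  simpa [LinearMap.mem_ker, LinearMap.mulLeft_apply] using hy4

include hφ

theorem W_orth (hS1 : ∀ i, star (S i) * S i = 1) (hS2 : ∑ j, S j * star (S j) = 1)
    {k l : ℕ} (h : k ≠ l) {x y : A} (hx : x ∈ Wsub φ S k) (hy : y ∈ Wsub φ S l) :
    φ (star x * y) = 0 := by
  rcases Nat.lt_or_ge k l with h' | h'
  · exact W_orth_lt S φ hS2 h' (Wsub_le_Bspan S φ k hx) hy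
  · have hlk : l < k := by omega
    have h0 : φ (star y * x) = 0 :=
      W_orth_lt S φ hS2 hlk (Wsub_le_Bspan S φ l hy) hx
    have hmem : star y * x ∈ Mspan S :=
      Mspan_mul S hS1 hS2
        (Mspan_star S (Bspan_le_Mspan S l l (Wsub_le_Bspan S φ l hy)))
        (Bspan_le_Mspan S k k (Wsub_le_Bspan S φ k hx))
    have : star x * y = star (star y * x) := by rw [star_mul, star_star]
    rw [this, φ_star S φ hφ hmem, h0, map_zero]

omit hφ

theorem core_eq_length (hS1 : ∀ i, star (S i) * S i = 1)
    (hS2 : ∑ j, S j * star (S j) = 1) {μ ν : List (Fin n)} (h : μ.length = ν.length) :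
    star (wordProd S μ) * wordProd S ν = 0 ∨ star (wordProd S μ) * wordProd S ν = 1 := by
  rcases core_cases S hS1 hS2 μ ν with h0 | ⟨τ, he, hl⟩ | ⟨τ, he, hl⟩
  · exact Or.inl h0
  · have : τ = [] := List.length_eq_zero_iff.mp (by omega)
    subst this
    exact Or.inr (by rw [he, wordProd_nil])
  · have : τ = [] := List.length_eq_zero_iff.mp (by omega)
    subst this
    exact Or.inr (by rw [he, wordProd_nil, star_one])

end Machinery

/-- For `(k,r) ≠ (l,s)` with `r, s ≥ 1`, the subspaces `V¹_{k,r}` and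
`V¹_{l,s}` are φ-orthogonal, and likewise `V²_{k,r}` and `V²_{l,s}` are φ-orthogonal. -/
theorem V_same_type_orthogonal
    {A : Type*} [NormedRing A] [StarRing A] [CStarRing A]
    [NormedAlgebra ℂ A] [StarModule ℂ A] [CompleteSpace A]
    {n : ℕ} (hn : 2 ≤ n) (S : Fin n → A)
    (hS1 : ∀ i, star (S i) * S i = 1)
    (hS2 : ∑ j, S j * star (S j) = 1)
    (φ : A →L[ℂ] ℂ)
    (hφ : ∀ μ ν : List (Fin n),
      φ (wordProd S μ * star (wordProd S ν)) =
        if μ = ν then ((n : ℂ) ^ μ.length)⁻¹ else 0)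
    (k l : ℕ) (r s : ℕ) (hr : 1 ≤ r) (hs : 1 ≤ s)
    (hne : (k, r) ≠ (l, s)) :
    (∀ a ∈ V1 φ S k r, ∀ b ∈ V1 φ S l s, φ (star a * b) = 0) ∧
    (∀ a ∈ V2 φ S k r, ∀ b ∈ V2 φ S l s, φ (star a * b) = 0) := by
  have hx_D0 : ∀ m : ℕ, ∀ x ∈ Wsub φ S m, x ∈ Dspan S 0 := by
    intro m x hx
    have := Bspan_le_Dspan S m m (Wsub_le_Bspan S φ m hx)
    simpa using this
  have hx_M : ∀ m : ℕ, ∀ x ∈ Wsub φ S m, x ∈ Mspan S :=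
    fun m x hx => Bspan_le_Mspan S m m (Wsub_le_Bspan S φ m hx)
  constructor
  · -- V1 case
    intro a ha b hb
    induction ha using Submodule.span_induction with
    | mem a hag =>
      induction hb using Submodule.span_induction with
      | mem b hbg =>
        obtain ⟨μ, x, hμ, hx, rfl⟩ := hag
        obtain ⟨ν, y, hν, hy, rfl⟩ := hbg
        have hre : star (wordProd S μ * x) * (wordProd S ν * y) =
            star x * (star (wordProd S μ) * wordProd S ν) * y := by
          rw [star_mul]; noncomm_ring
        by_cases hrs : r = s
        · have hkl : k ≠ l := by
            intro h; exact hne (by rw [h, hrs])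
          rcases core_eq_length S hS1 hS2 (μ := μ) (ν := ν) (by rw [hμ, hν, hrs]) with h0 | h1
          · rw [hre, h0, mul_zero, zero_mul, map_zero]
          · rw [hre, h1, mul_one]
            exact W_orth S φ hφ hS1 hS2 hkl hx hy
        · rw [hre]
          have m1 : star x ∈ Dspan S (-0 : ℤ) := Dspan_star S (hx_D0 k x hx)
          have m2 : star (wordProd S μ) ∈ Dspan S (-(r : ℤ)) := by
            have := star_wordProd_mem_Dspan S μ
            rwa [hμ] at this
          have m3 : wordProd S ν ∈ Dspan S (s : ℤ) := by
            have := wordProd_mem_Dspan S ν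
            rwa [hν] at this
          have m4 : y ∈ Dspan S 0 := hx_D0 l y hy
          have mem : star x * (star (wordProd S μ) * wordProd S ν) * y ∈
              Dspan S ((-0 + (-(r : ℤ) + s)) + 0) :=
            Dspan_mul S hS1 hS2 (Dspan_mul S hS1 hS2 m1 (Dspan_mul S hS1 hS2 m2 m3)) m4
          exact φ_Dspan_zero S φ hφ (by omega) mem
      | zero => rw [mul_zero, map_zero]
      | add u v _ _ h1 h2 => rw [mul_add, map_add, h1, h2, add_zero]
      | smul c u _ h1 => rw [mul_smul_comm, map_smul, h1, smul_zero]
    | zero => rw [star_zero, zero_mul, map_zero]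
    | add u v _ _ h1 h2 => rw [star_add, add_mul, map_add, h1, h2, add_zero]
    | smul c u _ h1 => rw [star_smul, smul_mul_assoc, map_smul, h1, smul_zero]
  · -- V2 case
    intro a ha b hb
    induction ha using Submodule.span_induction with
    | mem a hag =>
      induction hb using Submodule.span_induction with
      | mem b hbg =>
        obtain ⟨γ, x, hγ, hx, rfl⟩ := hag
        obtain ⟨δ, y, hδ, hy, rfl⟩ := hbg
        have hre : star (x * star (wordProd S γ)) * (y * star (wordProd S δ)) =
            wordProd S γ * (star x * y) * star (wordProd S δ) := by
          rw [star_mul, star_star]; noncomm_ring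
        by_cases hrs : r = s
        · have hkl : k ≠ l := by
            intro h; exact hne (by rw [h, hrs])
          rw [hre, compression S φ hφ γ δ (by rw [hγ, hδ, hrs])
            (Mspan_mul S hS1 hS2 (Mspan_star S (hx_M k x hx)) (hx_M l y hy))]
          rw [W_orth S φ hφ hS1 hS2 hkl hx hy, mul_zero]
        · rw [hre]
          have m1 : wordProd S γ ∈ Dspan S (r : ℤ) := by
            have := wordProd_mem_Dspan S γ
            rwa [hγ] at this
          have m2 : star x ∈ Dspan S (-0 : ℤ) := Dspan_star S (hx_D0 k x hx)
          have m3 : y ∈ Dspan S 0 := hx_D0 l y hy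
          have m4 : star (wordProd S δ) ∈ Dspan S (-(s : ℤ)) := by
            have := star_wordProd_mem_Dspan S δ
            rwa [hδ] at this
          have mem : wordProd S γ * (star x * y) * star (wordProd S δ) ∈
              Dspan S (((r : ℤ) + (-0 + 0)) + -(s : ℤ)) :=
            Dspan_mul S hS1 hS2 (Dspan_mul S hS1 hS2 m1 (Dspan_mul S hS1 hS2 m2 m3)) m4
          exact φ_Dspan_zero S φ hφ (by omega) mem
      | zero => rw [mul_zero, map_zero]
      | add u v _ _ h1 h2 => rw [mul_add, map_add, h1, h2, add_zero]
      | smul c u _ h1 => rw [mul_smul_comm, map_smul, h1, smul_zero]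
    | zero => rw [star_zero, zero_mul, map_zero]
    | add u v _ _ h1 h2 => rw [star_add, add_mul, map_add, h1, h2, add_zero]
    | smul c u _ h1 => rw [star_smul, smul_mul_assoc, map_smul, h1, smul_zero]
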